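/- Let L = {R, G, X, Y} and S_26 = {RRX, RXX, RYY, GYX, GXX, YYX, XXX}, and take L' = {R, G, Y} with the order G > R > Y. Then for all A, B, C ∈ Forb_c(S_26) with B ⊆ A and B ⊆ C, if A ⊗_B C is defined then A ⊗_B C ∈ Forb_c(S_26). -/

import Mathlib

namespace Paper

variable {L M : Type}

/-- The structure with colouring `r` embeds no triangle from `S`
(triangles identified with the multiset of their three edge colours). -/
def Avoids (r : M → M → L) (S : Set (Multiset L)) : Prop :=
  ∀ a b c : M, a ≠ b → a ≠ c → b ≠ c → ({r a b, r a c, r b c} : Multiset L) ∉ S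

/-- The substructure on `T` embeds no triangle from `S`. -/
def AvoidsOn (r : M → M → L) (T : Set M) (S : Set (Multiset L)) : Prop :=
  ∀ a ∈ T, ∀ b ∈ T, ∀ c ∈ T, a ≠ b → a ≠ c → b ≠ c →
    ({r a b, r a c, r b c} : Multiset L) ∉ S

/-- Colouring the pair `(a,c)` by `R` creates no forbidden triangle over a point of `B`. -/
def Compatible (r : M → M → L) (S : Set (Multiset L)) (B : Set M) (a c : M) (R : L) : Prop :=
  ∀ b ∈ B, ({r a b, r b c, R} : Multiset L) ∉ S

/-- `R` is the greatest relation of `L'` (in the priority order `le`) whose use on the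
pair `(a,c)` creates no forbidden triangle over `B`. -/
def PriorityColour (le : L → L → Prop) (r : M → M → L) (S : Set (Multiset L)) (L' : Set L)
    (B : Set M) (a c : M) (R : L) : Prop :=
  (R ∈ L' ∧ Compatible r S B a c R) ∧
    ∀ R' : L, R' ∈ L' → Compatible r S B a c R' → le R' R

/-- `A ⫫_B C`: the substructure on `A ∪ B ∪ C` is the prioritised semi-free amalgam
`(A ∪ B) ⊗_B (B ∪ C)`. -/
def Indep (le : L → L → Prop) (r : M → M → L) (S : Set (Multiset L)) (L' : Set L)
    (A B C : Set M) : Prop :=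
  A ∩ C ⊆ B ∧ ∀ a ∈ A, a ∉ B → ∀ c ∈ C, c ∉ B → PriorityColour le r S L' B a c (r a c)

/-- Whenever the prioritised semi-free amalgam `A ⊗_B C` of members of `Forb_c(S)` is
defined, it lies in `Forb_c(S)`.  (The amalgam is represented by a finite vertex type
`V = A ∪ C` with `B = A ∩ C`, whose cross edges are coloured by the priority rule.) -/
def AmalgamAvoids (le : L → L → Prop) (S : Set (Multiset L)) (L' : Set L) : Prop :=
  ∀ (V : Type) [Fintype V] (rr : V → V → L) (A C : Set V),
    (∀ a b, rr a b = rr b a) → A ∪ C = Set.univ →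
    AvoidsOn rr A S → AvoidsOn rr C S →
    (∀ a ∈ A \ C, ∀ c ∈ C \ A, PriorityColour le rr S L' (A ∩ C) a c (rr a c)) →
    Avoids rr S

/-- The prioritised semi-free amalgam of members of `Forb_c(S)` is always defined. -/
def AmalgamDefined (le : L → L → Prop) (S : Set (Multiset L)) (L' : Set L) : Prop :=
  ∀ (V : Type) [Fintype V] (rr : V → V → L) (A C : Set V),
    (∀ a b, rr a b = rr b a) → A ∪ C = Set.univ →
    AvoidsOn rr A S → AvoidsOn rr C S →
    ∀ a ∈ A \ C, ∀ c ∈ C \ A, ∃ R : L, PriorityColour le rr S L' (A ∩ C) a c R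

/-- `Forb_c(S)` is a prioritised semi-free amalgamation class w.r.t. the order `le` on `L'`. -/
def IsPrioritisedSemiFree (le : L → L → Prop) (S : Set (Multiset L)) (L' : Set L) : Prop :=
  AmalgamDefined le S L' ∧ AmalgamAvoids le S L'

/-- `Forb_c(S)` is a semi-free amalgamation class with set of solutions `L'`. -/
def IsSemiFree (S : Set (Multiset L)) (L' : Set L) : Prop :=
  ∀ (V : Type) [Fintype V] (rr : V → V → L) (A C : Set V),
    (∀ a b, rr a b = rr b a) → A ∪ C = Set.univ →
    AvoidsOn rr A S → AvoidsOn rr C S →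
    ∃ rr' : V → V → L, (∀ a b, rr' a b = rr' b a) ∧ Avoids rr' S ∧
      (∀ a ∈ A, ∀ b ∈ A, rr' a b = rr a b) ∧
      (∀ a ∈ C, ∀ b ∈ C, rr' a b = rr a b) ∧
      (∀ a ∈ A \ C, ∀ c ∈ C \ A, rr' a c ∈ L')

/-- `Forb_c(S)` has the amalgamation property (with joint embedding as the case
of empty intersection); it is then an amalgamation class. -/
def HasAmalgamation (S : Set (Multiset L)) : Prop :=
  ∀ (V : Type) [Fintype V] (rr : V → V → L) (A C : Set V),
    (∀ a b, rr a b = rr b a) → A ∪ C = Set.univ →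
    AvoidsOn rr A S → AvoidsOn rr C S →
    ∃ rr' : V → V → L, (∀ a b, rr' a b = rr' b a) ∧ Avoids rr' S ∧
      (∀ a ∈ A, ∀ b ∈ A, rr' a b = rr a b) ∧
      (∀ a ∈ C, ∀ b ∈ C, rr' a b = rr a b)

/-- `(M, r)` is the Fraïssé limit of `Forb_c(S)`: a countable structure whose complete
edge-colouring avoids `S`, which is homogeneous, and which satisfies the extension
property with respect to members of `Forb_c(S)`. -/
structure IsLimit (S : Set (Multiset L)) (r : M → M → L) : Prop where
  countable : Countable M
  symm : ∀ a b : M, r a b = r b a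
  avoids : Avoids r S
  extension : ∀ (n : ℕ) (c : Fin n → Fin n → L), (∀ i j, c i j = c j i) →
    Avoids c S → ∀ (A : Finset (Fin n)) (f : Fin n → M), Set.InjOn f ↑A →
    (∀ i ∈ A, ∀ j ∈ A, i ≠ j → r (f i) (f j) = c i j) →
    ∃ g : Fin n ↪ M, (∀ i ∈ A, g i = f i) ∧ ∀ i j : Fin n, i ≠ j → r (g i) (g j) = c i j
  homogeneous : ∀ (A : Finset M) (f : M → M), Set.InjOn f ↑A →
    (∀ a ∈ A, ∀ b ∈ A, r (f a) (f b) = r a b) →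
    ∃ g : Equiv.Perm M, (∀ x y, r (g x) (g y) = r x y) ∧ ∀ a ∈ A, g a = f a

/-- The automorphism group of the coloured structure `(M, r)`, as a subgroup of `Perm M`. -/
def aut (r : M → M → L) : Subgroup (Equiv.Perm M) where
  carrier := {g : Equiv.Perm M | ∀ a b, r (g a) (g b) = r a b}
  one_mem' := fun _ _ => rfl
  mul_mem' := by
    intro g h hg hh a b
    have : r (g (h a)) (g (h b)) = r a b := (hg (h a) (h b)).trans (hh a b)
    simpa [Equiv.Perm.mul_apply] using this
  inv_mem' := by
    intro g hg a b
    have := hg (g⁻¹ a) (g⁻¹ b)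
    simpa using this.symm

/-- The pointwise stabiliser `G_(X)` of `X` inside `Aut(M, r)`. -/
def pstab (r : M → M → L) (X : Set M) : Subgroup (aut r) where
  carrier := {g | ∀ x ∈ X, (g : Equiv.Perm M) x = x}
  one_mem' := fun _ _ => rfl
  mul_mem' := by
    intro g h hg hh x hx
    have : (g : Equiv.Perm M) ((h : Equiv.Perm M) x) = x := by rw [hh x hx, hg x hx]
    simpa [Equiv.Perm.mul_apply] using this
  inv_mem' := by
    intro g hg x hx
    have := hg x hx
    simp only [Subgroup.coe_inv]
    conv_lhs => rw [← this]
    simp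

/-- The 1-type of `a` over `X`: its orbit under the pointwise stabiliser of `X`. -/
def typeOf (r : M → M → L) (X : Set M) (a : M) : Set M :=
  {b | ∃ g : Equiv.Perm M, g ∈ aut r ∧ (∀ x ∈ X, g x = x) ∧ g a = b}

/-- Two `n`-tuples have the same type over `X`: they lie in the same orbit under the
pointwise stabiliser of `X`. -/
def SameTypeFn (r : M → M → L) (X : Set M) {n : ℕ} (a b : Fin n → M) : Prop :=
  ∃ g : Equiv.Perm M, g ∈ aut r ∧ (∀ x ∈ X, g x = x) ∧ ∀ i, g (a i) = b i

/-- `f` moves almost maximally: every 1-type over every finite set `X` has a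
realisation `b` with `b ⫫_X f(b)`. -/
def MovesAlmostMaximally (le : L → L → Prop) (r : M → M → L) (S : Set (Multiset L))
    (L' : Set L) (f : Equiv.Perm M) : Prop :=
  ∀ (X : Finset M) (a : M), ∃ b ∈ typeOf r ↑X a, Indep le r S L' {b} ↑X {f b}

/-- The commutator `[x, y] = x⁻¹y⁻¹xy`. -/
def Comm {G : Type*} [Group G] (x y : G) : G := x⁻¹ * y⁻¹ * x * y

/-- `le` is a linear order on the subset `L'`. -/
def IsLinearOn (le : L → L → Prop) (L' : Set L) : Prop :=
  (∀ a ∈ L', le a a) ∧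
  (∀ a ∈ L', ∀ b ∈ L', ∀ c ∈ L', le a b → le b c → le a c) ∧
  (∀ a ∈ L', ∀ b ∈ L', le a b → le b a → a = b) ∧
  (∀ a ∈ L', ∀ b ∈ L', le a b ∨ le b a)

/-- `R1 > R2` are the two greatest relations of `L'` in the order `le`. -/
def TwoGreatest (le : L → L → Prop) (L' : Set L) (R1 R2 : L) : Prop :=
  R1 ∈ L' ∧ R2 ∈ L' ∧ R2 ≠ R1 ∧ le R2 R1 ∧
    (∀ R ∈ L', le R R1) ∧ ∀ R ∈ L', R ≠ R1 → le R R2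

/-- Condition A (i): no triangle of `S` contains two occurrences of `R1`,
or an `R1` together with an `R2`. -/
def CondA1 (S : Set (Multiset L)) (R1 R2 : L) : Prop :=
  ∀ t ∈ S, ¬ (({R1, R1} : Multiset L) ≤ t) ∧ ¬ (({R1, R2} : Multiset L) ≤ t)

/-- Condition A (ii): if `a ⫫_{{b} ∪ B} c` and `r(a,b) ∈ L'` then `a ⫫_B c`. -/
def CondA2 (le : L → L → Prop) (r : M → M → L) (S : Set (Multiset L)) (L' : Set L) : Prop :=
  ∀ (a b c : M) (B : Finset M), r a b ∈ L' →
    Indep le r S L' {a} (insert b ↑B) {c} → Indep le r S L' {a} ↑B {c}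

/-- Condition 1: `S` contains no triangle having two of its three edges in `L'`. -/
def Cond1 (S : Set (Multiset L)) (L' : Set L) : Prop :=
  ∀ t ∈ S, ∀ x ∈ L', ∀ y ∈ L', ¬ (({x, y} : Multiset L) ≤ t)

/-- Condition 2 with respect to `L' = {R1, R2}` (ordered `R1 > R2`) and the subsets
`Lst = L*` and `Lhat = L̂`. -/
def Cond2 (S : Set (Multiset L)) (R1 R2 : L) (Lst Lhat : Set L) : Prop :=
  R1 ≠ R2 ∧ R1 ∉ Lst ∧ R2 ∉ Lst ∧ R1 ∉ Lhat ∧ R2 ∉ Lhat ∧ (∀ x ∈ Lst, x ∉ Lhat) ∧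
  (∀ R' : L, R' ∉ Lhat → R' ≠ R2 → ∀ Ra ∈ Lst, ∀ Rb ∈ Lst,
    ({R', Ra, Rb} : Multiset L) ∈ S) ∧
  (∀ Ra ∈ Lst, ({R2, R2, Ra} : Multiset L) ∈ S) ∧
  (∀ Rh ∈ Lhat, ∀ Ra ∈ Lst, ({R2, Rh, Ra} : Multiset L) ∈ S) ∧
  (∀ t ∈ S, R1 ∈ t → ∃ Ra ∈ Lst, ∃ Rb ∈ Lst, t = ({R1, Ra, Rb} : Multiset L)) ∧
  (∀ t ∈ S, ({R2, R2} : Multiset L) ≤ t → ∃ Ra ∈ Lst, t = ({R2, R2, Ra} : Multiset L))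


/-- The language `L = {R, G, X, Y}` of four binary, symmetric, irreflexive
relation symbols. -/
inductive C4 : Type
  | R | G | X | Y
deriving DecidableEq

/-- The set of forbidden triangles of case #26:
`S_26 = {RRX, RXX, RYY, GYX, GXX, YYX, XXX}`. -/
def S26 : Set (Multiset C4) :=
  {({C4.R, C4.R, C4.X} : Multiset C4), ({C4.R, C4.X, C4.X} : Multiset C4),
   ({C4.R, C4.Y, C4.Y} : Multiset C4), ({C4.G, C4.Y, C4.X} : Multiset C4),
   ({C4.G, C4.X, C4.X} : Multiset C4), ({C4.Y, C4.Y, C4.X} : Multiset C4),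
   ({C4.X, C4.X, C4.X} : Multiset C4)}

/-- The rank realising the priority order `G > R > Y` (with `X` at the bottom). -/
def rank26 : C4 → ℕ
  | C4.G => 3
  | C4.R => 2
  | C4.Y => 1
  | C4.X => 0

/-- The priority order `G > R > Y` on `L' = {R, G, Y}`. -/
def le26 (x y : C4) : Prop := rank26 x ≤ rank26 y

/-! A forbidden triangle of the amalgam has a vertex in `A ∖ C` and one in `C ∖ A`. If its third
vertex lies in `B = A ∩ C`, the triangle is excluded by the choice of the cross edge. Otherwise two
vertices `a, b` lie on one side and `c` on the other, and `ac`, `bc` are cross edges with colours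
in `{R, G, Y}`. No triangle of `S_26` has two `G` edges, so one of them, say `ac`, is not `G`;
then `G` was rejected on `ac` because of some `w ∈ B` with `{aw, wc, G} ∈ S_26`, and a finite
check over the colourings of the six edges of `{a, b, c, w}` shows that `abw`, `awc`, `bwc` cannot
all avoid `S_26`. -/

def triangle (r : M → M → L) (a b c : M) : Multiset L := {r a b, r a c, r b c}

theorem triple_swap_left {α : Type*} (p q s : α) : ({p, q, s} : Multiset α) = {q, p, s} :=
  Multiset.cons_swap _ _ _

theorem triple_swap_right {α : Type*} (p q s : α) : ({p, q, s} : Multiset α) = {p, s, q} :=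
  congrArg (Multiset.cons p) (Multiset.pair_comm q s)

section Triangles

variable {r : M → M → L} {S : Set (Multiset L)} {B : Set M}

theorem triangle_swap_left (hs : ∀ x y, r x y = r y x) (a b c : M) :
    triangle r b a c = triangle r a b c := by
  rw [triangle, triangle, hs b a, triple_swap_right]

theorem triangle_swap_right (hs : ∀ x y, r x y = r y x) (a b c : M) :
    triangle r a c b = triangle r a b c := by
  rw [triangle, triangle, hs c b, triple_swap_left]

theorem Compatible.symm {a c : M} {R : L} (hs : ∀ x y, r x y = r y x)
    (h : Compatible r S B a c R) : Compatible r S B c a R := by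
  intro w hw hmem
  rw [hs c w, hs w a, triple_swap_left] at hmem
  exact h w hw hmem

theorem PriorityColour.symm {le : L → L → Prop} {L' : Set L} {a c : M}
    (hs : ∀ x y, r x y = r y x) (h : PriorityColour le r S L' B a c (r a c)) :
    PriorityColour le r S L' B c a (r c a) :=
  hs a c ▸ ⟨⟨h.1.1, h.1.2.symm hs⟩, fun R' hR' hc => h.2 R' hR' (hc.symm hs)⟩

theorem Compatible.triangle_not_mem {a b c : M} (h : Compatible r S B a c (r a c))
    (hb : b ∈ B) : triangle r a b c ∉ S := by
  rw [triangle, triple_swap_right]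
  exact h b hb

theorem PriorityColour.exists_blocker {le : L → L → Prop} {L' : Set L} {a c : M} {R R' : L}
    (h : PriorityColour le r S L' B a c R) (hR' : R' ∈ L') (hlt : ¬ le R' R) :
    ∃ w ∈ B, ({r a w, r w c, R'} : Multiset L) ∈ S := by
  by_contra! hfree
  exact hlt (h.2 R' hR' hfree)

theorem avoids_of_cross_triangles {A C : Set M} (hs : ∀ x y, r x y = r y x)
    (huniv : A ∪ C = Set.univ) (hA : AvoidsOn r A S) (hC : AvoidsOn r C S)
    (hcross : ∀ a b c, a ≠ b → a ≠ c → b ≠ c → a ∉ C → c ∉ A → triangle r a b c ∉ S) :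
    Avoids r S := by
  intro x y z hxy hxz hyz h
  change triangle r x y z ∈ S at h
  have h132 : triangle r x z y ∈ S := by rwa [triangle_swap_right hs]
  have h213 : triangle r y x z ∈ S := by rwa [triangle_swap_left hs]
  have h231 : triangle r y z x ∈ S := by rwa [triangle_swap_right hs]
  have h312 : triangle r z x y ∈ S := by rwa [triangle_swap_left hs]
  have h321 : triangle r z y x ∈ S := by rwa [triangle_swap_right hs]
  have parts : ∀ v, (v ∈ A ∧ v ∉ C) ∨ (v ∉ A ∧ v ∈ C) ∨ (v ∈ A ∧ v ∈ C) := by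
    intro v
    have hv : v ∈ A ∨ v ∈ C := Set.eq_univ_iff_forall.mp huniv v
    tauto
  rcases parts x with ⟨_, _⟩ | ⟨_, _⟩ | ⟨_, _⟩ <;>
    rcases parts y with ⟨_, _⟩ | ⟨_, _⟩ | ⟨_, _⟩ <;>
    rcases parts z with ⟨_, _⟩ | ⟨_, _⟩ | ⟨_, _⟩ <;>
    first
      | exact hA x ‹_› y ‹_› z ‹_› hxy hxz hyz h
      | exact hC x ‹_› y ‹_› z ‹_› hxy hxz hyz h
      | exact hcross x y z hxy hxz hyz ‹_› ‹_› h
      | exact hcross x z y hxz hxy hyz.symm ‹_› ‹_› h132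
      | exact hcross y x z hxy.symm hyz hxz ‹_› ‹_› h213
      | exact hcross y z x hyz hxy.symm hxz.symm ‹_› ‹_› h231
      | exact hcross z x y hxz.symm hyz.symm hxy ‹_› ‹_› h312
      | exact hcross z y x hyz.symm hxz.symm hxy.symm ‹_› ‹_› h321

end Triangles

instance : Fintype C4 := ⟨{C4.R, C4.G, C4.X, C4.Y}, fun x => by cases x <;> decide⟩

instance (t : Multiset C4) : Decidable (t ∈ S26) :=
  decidable_of_iff (t = {C4.R, C4.R, C4.X} ∨ t = {C4.R, C4.X, C4.X} ∨ t = {C4.R, C4.Y, C4.Y} ∨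
    t = {C4.G, C4.Y, C4.X} ∨ t = {C4.G, C4.X, C4.X} ∨ t = {C4.Y, C4.Y, C4.X} ∨
    t = {C4.X, C4.X, C4.X}) (by simp [S26])

theorem not_le26_G {x : C4} (hx : x ≠ C4.G) : ¬ le26 C4.G x := by
  cases x <;> simp_all [le26, rank26]

theorem S26_not_two_G (x : C4) : ({x, C4.G, C4.G} : Multiset C4) ∉ S26 := by
  cases x <;> decide

set_option synthInstance.maxSize 1000 in
/-- Here `a, b` lie on one side of the amalgam, `c` on the other and `w ∈ B`; `hblock` says that
`w` is why the cross edge `ac` did not receive the colour `G`. -/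
theorem S26_four_point (ab ac bc aw bw wc : C4) (habc : ({ab, ac, bc} : Multiset C4) ∈ S26)
    (hac : ac ∈ ({C4.R, C4.G, C4.Y} : Set C4)) (hbc : bc ∈ ({C4.R, C4.G, C4.Y} : Set C4))
    (habw : ({ab, aw, bw} : Multiset C4) ∉ S26) (hawc : ({aw, wc, ac} : Multiset C4) ∉ S26)
    (hbwc : ({bw, wc, bc} : Multiset C4) ∉ S26) (hblock : ({aw, wc, C4.G} : Multiset C4) ∈ S26) :
    False := by
  revert ab ac bc aw bw wc
  decide

section Amalgam

variable {V : Type} {rr : V → V → C4} {B : Set V}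

theorem S26_cross_triangle_not_mem_of_ne_G {a b c : V}
    (hT : ∀ w ∈ B, triangle rr a b w ∉ S26)
    (Pac : PriorityColour le26 rr S26 ({C4.R, C4.G, C4.Y} : Set C4) B a c (rr a c))
    (Pbc : PriorityColour le26 rr S26 ({C4.R, C4.G, C4.Y} : Set C4) B b c (rr b c))
    (hG : rr a c ≠ C4.G) : triangle rr a b c ∉ S26 := by
  intro h
  obtain ⟨w, hw, hblock⟩ := Pac.exists_blocker (by simp) (not_le26_G hG)
  exact S26_four_point _ _ _ _ _ _ h Pac.1.1 Pbc.1.1 (hT w hw) (Pac.1.2 w hw) (Pbc.1.2 w hw)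
    hblock

theorem S26_cross_triangle_not_mem {a b c : V} (hs : ∀ x y, rr x y = rr y x)
    (hT : ∀ w ∈ B, triangle rr a b w ∉ S26)
    (Pac : PriorityColour le26 rr S26 ({C4.R, C4.G, C4.Y} : Set C4) B a c (rr a c))
    (Pbc : PriorityColour le26 rr S26 ({C4.R, C4.G, C4.Y} : Set C4) B b c (rr b c)) :
    triangle rr a b c ∉ S26 := by
  by_cases hG : rr a c = C4.G
  · -- then `bc` is not `G`, and the roles of `a` and `b` can be swapped
    intro h
    have hbG : rr b c ≠ C4.G := by
      intro hbG
      rw [triangle, hG, hbG] at h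
      exact S26_not_two_G _ h
    have hT' : ∀ w ∈ B, triangle rr b a w ∉ S26 := by
      intro w hw
      rw [triangle_swap_left hs]
      exact hT w hw
    rw [← triangle_swap_left hs] at h
    exact S26_cross_triangle_not_mem_of_ne_G hT' Pbc Pac hbG h
  · exact S26_cross_triangle_not_mem_of_ne_G hT Pac Pbc hG

theorem S26_triangle_not_mem_of_cross {A C : Set V} (hs : ∀ x y, rr x y = rr y x)
    (huniv : A ∪ C = Set.univ) (hA : AvoidsOn rr A S26) (hC : AvoidsOn rr C S26)
    (hP : ∀ a ∈ A \ C, ∀ c ∈ C \ A,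
      PriorityColour le26 rr S26 ({C4.R, C4.G, C4.Y} : Set C4) (A ∩ C) a c (rr a c))
    {a b c : V} (hab : a ≠ b) (hbc : b ≠ c) (haC : a ∉ C) (hcA : c ∉ A) :
    triangle rr a b c ∉ S26 := by
  have mem : ∀ v, v ∈ A ∨ v ∈ C := Set.eq_univ_iff_forall.mp huniv
  have haA : a ∈ A := (mem a).resolve_right haC
  have hcC : c ∈ C := (mem c).resolve_left hcA
  have Pac := hP a ⟨haA, haC⟩ c ⟨hcC, hcA⟩
  by_cases hbA : b ∈ A <;> by_cases hbC : b ∈ C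
  · exact Pac.1.2.triangle_not_mem ⟨hbA, hbC⟩
  · refine S26_cross_triangle_not_mem hs (fun w hw => ?_) Pac (hP b ⟨hbA, hbC⟩ c ⟨hcC, hcA⟩)
    exact hA a haA b hbA w hw.1 hab (fun e => haC (e ▸ hw.2)) (fun e => hbC (e ▸ hw.2))
  · rw [triangle_swap_left hs b a c, triangle_swap_right hs b c a, triangle_swap_left hs c b a]
    refine S26_cross_triangle_not_mem hs (fun w hw => ?_) (Pac.symm hs)
      ((hP a ⟨haA, haC⟩ b ⟨hbC, hbA⟩).symm hs)
    exact hC c hcC b hbC w hw.2 hbc.symm (fun e => hcA (e ▸ hw.1)) (fun e => hbA (e ▸ hw.1))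
  · exact ((mem b).elim hbA hbC).elim

end Amalgam

/-- **Lemma.** For case #26, with `L' = {R, G, Y}` ordered `G > R > Y`: for all
`A, B, C ∈ Forb_c(S_26)` with `B ⊆ A` and `B ⊆ C`, if the prioritised semi-free
amalgam `A ⊗_B C` is defined then it lies in `Forb_c(S_26)`. -/
theorem case26_amalgam_avoids :
    AmalgamAvoids le26 S26 ({C4.R, C4.G, C4.Y} : Set C4) := by
  intro V _ rr A C hs huniv hA hC hP
  exact avoids_of_cross_triangles hs huniv hA hC fun _ _ _ hab _ hbc haC hcA =>
    S26_triangle_not_mem_of_cross hs huniv hA hC hP hab hbc haC hcA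

end Paper
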